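/- Let ν=(ν_{i,j})_{i∈{0,1,∞},j∈{0,1,2}} ∈ ℂ⁹ with ν_{0,0}+ν_{0,1}+ν_{0,2}=0, ν_{1,0}+ν_{1,1}+ν_{1,2}=0, ν_{∞,0}+ν_{∞,1}+ν_{∞,2}=2, and let q,p ∈ ℂ with q ∉ {0,1}. Let a₁₂,a₁₃ ∈ ℂ[z] be polynomials of degree ≤ 2 satisfying the ν-interpolation conditions at (q,p). Let ν′ be obtained from ν by interchanging the (i=0)-column with the (i=1)-column, set q′=1−q, p′=−p, a′₁₂(z)=a₁₂(1−z), a′₁₃(z)=a₁₃(1−z). Then: (i) a′₁₂,a′₁₃ satisfy the ν′-interpolation conditions at (q′,p′); and (ii) with A(z)=[[0,a₁₂(z),a₁₃(z)],[1,−p,0],[0,z−q,p]], A′(z)=[[0,a′₁₂(z),a′₁₃(z)],[1,−p′,0],[0,z−q′,p′]], and D=diag(−1,1,1), one has D·(−A(1−z))·D = A′(z) for all z ∈ ℂ. Consequently the pullback of the connection d + A(z)dz/(z(z−1)) under z ↦ 1−z is gauge equivalent via the constant matrix D to the ν′-normal-form connection with parameters (1−q,−p). -/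
import Mathlib


open Polynomial

/-- The `ν`-interpolation conditions at `(q,p)` for a pair of polynomials
`a₁₂, a₁₃` of degree at most `2`. Indices `i : Fin 3` stand for `i ∈ {0, 1, ∞}`
(with `2` standing for `∞`). -/
def InterpCond (ν : Fin 3 → Fin 3 → ℂ) (q p : ℂ) (a12 a13 : ℂ[X]) : Prop :=
  a12.degree ≤ 2 ∧ a13.degree ≤ 2 ∧
  a12.eval 0 = -p ^ 2 - (ν 0 0 * ν 0 1 + ν 0 1 * ν 0 2 + ν 0 2 * ν 0 0) ∧
  a12.eval 1 = -p ^ 2 - (ν 1 0 * ν 1 1 + ν 1 1 * ν 1 2 + ν 1 2 * ν 1 0) ∧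
  a12.coeff 2 = 1 - (ν 2 0 * ν 2 1 + ν 2 1 * ν 2 2 + ν 2 2 * ν 2 0) ∧
  q * a13.eval 0 = (p + ν 0 0) * (p + ν 0 1) * (p + ν 0 2) ∧
  (q - 1) * a13.eval 1 = (p - ν 1 0) * (p - ν 1 1) * (p - ν 1 2) ∧
  a13.coeff 2 = (1 - ν 2 0) * (1 - ν 2 1) * (1 - ν 2 2)

/-- The normal-form matrix `A(z)` of the connection `∇ = d + A(z) dz/(z(z-1))`. -/
def Amat (a12 a13 : ℂ[X]) (q p z : ℂ) : Matrix (Fin 3) (Fin 3) ℂ :=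
  !![0, a12.eval z, a13.eval z;
     1, -p, 0;
     0, z - q, p]


lemma rep2 (p : ℂ[X]) (hp : p.degree ≤ 2) :
    p = C (p.coeff 0) + C (p.coeff 1) * X + C (p.coeff 2) * X ^ 2 := by
  ext n
  match n with
  | 0 => simp
  | 1 => simp [coeff_X_pow]
  | 2 => simp [coeff_X_pow]
  | (n+3) =>
    have h : p.coeff (n+3) = 0 := coeff_eq_zero_of_degree_lt (lt_of_le_of_lt hp (by
      exact_mod_cast WithBot.coe_lt_coe.2 (by omega)))
    simp [h, coeff_X_pow, coeff_X]

lemma coeff2_comp (p : ℂ[X]) (hp : p.degree ≤ 2) :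
    (p.comp (1 - X)).coeff 2 = p.coeff 2 := by
  conv_lhs => rw [rep2 p hp]
  simp only [add_comp, mul_comp, C_comp, X_comp, pow_two, sub_mul, one_mul, mul_sub, mul_one]
  ring_nf
  simp [coeff_X_pow, coeff_X, coeff_C]

lemma deg_comp (p : ℂ[X]) (hp : p.degree ≤ 2) :
    (p.comp (1 - X)).degree ≤ 2 := by
  have hd : ((1:ℂ[X]) - X).natDegree = 1 := by
    have h : (1:ℂ[X]) - X = -(X - C 1) := by rw [C_1]; ring
    rw [h, natDegree_neg, natDegree_X_sub_C]
  calc (p.comp (1-X)).degree ≤ ((p.comp (1-X)).natDegree : WithBot ℕ) := degree_le_natDegree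
    _ = (p.natDegree : WithBot ℕ) := by rw [natDegree_comp, hd, mul_one]
    _ ≤ 2 := by exact_mod_cast natDegree_le_iff_degree_le.2 hp
lemma eval_comp_one_sub (a : ℂ[X]) (x : ℂ) :
    (a.comp (1 - X)).eval x = a.eval (1 - x) := by
  simp [eval_comp]

theorem stmt_14 (ν : Fin 3 → Fin 3 → ℂ) (q p : ℂ) (a12 a13 : ℂ[X])
    (h0 : ν 0 0 + ν 0 1 + ν 0 2 = 0) (h1 : ν 1 0 + ν 1 1 + ν 1 2 = 0)
    (hinf : ν 2 0 + ν 2 1 + ν 2 2 = 2)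
    (hq0 : q ≠ 0) (hq1 : q ≠ 1)
    (hic : InterpCond ν q p a12 a13) :
    InterpCond (fun i j => ν (Equiv.swap 0 1 i) j) (1 - q) (-p)
        (a12.comp (1 - X)) (a13.comp (1 - X)) ∧
    ∀ z : ℂ,
      (!![-1, 0, 0; 0, 1, 0; 0, 0, 1] : Matrix (Fin 3) (Fin 3) ℂ) *
          (-(Amat a12 a13 q p (1 - z))) *
          (!![-1, 0, 0; 0, 1, 0; 0, 0, 1] : Matrix (Fin 3) (Fin 3) ℂ)
        = Amat (a12.comp (1 - X)) (a13.comp (1 - X)) (1 - q) (-p) z := by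
  obtain ⟨d12, d13, e0, e1, c12, f0, f1, c13⟩ := hic
  have hs0 : Equiv.swap (0 : Fin 3) 1 0 = 1 := by decide
  have hs1 : Equiv.swap (0 : Fin 3) 1 1 = 0 := by decide
  have hs2 : Equiv.swap (0 : Fin 3) 1 2 = 2 := by decide
  constructor
  · refine ⟨deg_comp _ d12, deg_comp _ d13, ?_, ?_, ?_, ?_, ?_, ?_⟩ <;>
      simp only [hs0, hs1, hs2, eval_comp_one_sub, coeff2_comp _ d12, coeff2_comp _ d13]
    · rw [show (1:ℂ) - 0 = 1 by ring]; linear_combination e1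
    · rw [show (1:ℂ) - 1 = 0 by ring]; linear_combination e0
    · exact c12
    · rw [show (1:ℂ) - 0 = 1 by ring]; linear_combination -f1
    · rw [show (1:ℂ) - 1 = 0 by ring]; linear_combination -f0
    · exact c13
  · intro z
    ext i j
    fin_cases i <;> fin_cases j <;>
      simp [Amat, Matrix.mul_apply, Fin.sum_univ_three, eval_comp_one_sub, Matrix.vecHead, Matrix.vecTail] <;> ring
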